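/- arXiv:2310.18568 — 3 statements merged into one kernel-verified Lean document; each statement's English description precedes it below -/
import Mathlib

section
/- Let m ≥ 2, n = 2m, and let F(x) = x^{2^{m+1}+3} on F_{2^n}. Then F is second-order zero differential 2^m-uniform, i.e. max{∇_F(a,b) : a, b ∈ F_{2^n}\{0}, a ≠ b} = 2^m. -/
/-!
Write `q = 2 ^ m`, so that `F = 𝔽_{q²}`. Since `x ↦ x ^ (2q)` is additive in characteristic 2,
the second difference of `x ^ (2q + 3) = x ^ (2q) * x ^ 3` in the directions `a, b` is an affine
map `L x + c` with `L x = α x^(2q) + β x² + γ x` additive and `α = ab(a + b) ≠ 0`. Its zero set is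
empty or a coset of `ker L`. If `γ = 0`, then `L` is the square of `x ↦ √α x^q + √β x`, whose
kernel has at most `q` elements; otherwise eliminating `x^q` between `L x = 0` and its `q`-th power
leaves a nonzero polynomial of degree at most 4 that vanishes on `ker L`.
For `a ∈ 𝔽_q \ {0, 1}` and `b = 1` the second difference is `a(a + 1)(x^q + x + w)²` with
`w² = a² + a + 1 ∈ 𝔽_q`, and the trace `x ↦ x^q + x` has kernel `𝔽_q` and image `𝔽_q`, so it has
exactly `q` zeros.
-/

open Polynomial Finset

lemma card_filter_le_natDegree {R : Type*} [CommRing R] [IsDomain R] [Fintype R]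
    {P : R → Prop} [DecidablePred P] {p : R[X]} (hp : p ≠ 0) (h : ∀ x, P x → p.IsRoot x) :
    #{x | P x} ≤ p.natDegree :=
  card_le_degree_of_subset_roots fun x hx ↦ (mem_roots hp).2 (h x (mem_filter.1 hx).2)

namespace AddMonoidHom

variable {G M : Type*} [AddGroup G] [Fintype G] [AddMonoid M] [DecidableEq M]

lemma card_fiber_le_card_ker (f : G →+ M) (y : M) : #{x | f x = y} ≤ #{x | f x = 0} := by
  by_cases hy : y ∈ Set.range f
  · exact (card_fiber_eq_of_mem_range f hy ⟨0, map_zero f⟩).le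
  · simp_all

lemma card_eq_card_image_mul_card_ker (f : G →+ M) :
    Fintype.card G = #(univ.image f) * #{x | f x = 0} := by
  rw [← card_univ, card_eq_sum_card_image f univ, sum_const_nat]
  intro y hy
  obtain ⟨x, -, rfl⟩ := mem_image.1 hy
  exact card_fiber_eq_of_mem_range f ⟨x, rfl⟩ ⟨0, map_zero f⟩

end AddMonoidHom

def secondDiff {R : Type*} [Add R] (f : R → R) (a b x : R) : R :=
  f (x + a + b) + f (x + b) + f (x + a) + f x

section CharTwo

variable {F : Type*} [Field F] {m : ℕ}

lemma pow_two_pow_pow_two_pow_of_card [Fintype F] (hF : Fintype.card F = (2 ^ m) ^ 2) (x : F) :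
    (x ^ 2 ^ m) ^ 2 ^ m = x := by
  rw [← pow_mul, ← sq, ← hF, FiniteField.pow_card]

lemma card_pow_two_pow_eq_self_le [Fintype F] [DecidableEq F] (hm : m ≠ 0) :
    #{x : F | x ^ 2 ^ m = x} ≤ 2 ^ m := by
  refine (card_filter_le_natDegree (FiniteField.X_pow_card_pow_sub_X_ne_zero F hm one_lt_two)
    fun x hx ↦ ?_).trans (FiniteField.X_pow_card_pow_sub_X_natDegree_eq F hm one_lt_two).le
  simp [hx]

variable [CharP F 2]

variable (F m) in
def relTrace : F →+ F := (iterateFrobenius F 2 m).toAddMonoidHom + AddMonoidHom.id F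

@[simp]
lemma relTrace_apply (x : F) : relTrace F m x = x ^ 2 ^ m + x := rfl

lemma card_relTrace_fiber [Fintype F] [DecidableEq F] (hF : Fintype.card F = (2 ^ m) ^ 2)
    {w : F} (hw : w ^ 2 ^ m = w) : #{x | x ^ 2 ^ m + x = w} = 2 ^ m := by
  have hker : #{x : F | relTrace F m x = 0} = #{x : F | x ^ 2 ^ m = x} := by
    simp only [relTrace_apply, CharTwo.add_eq_zero]
  have himage : univ.image (relTrace F m) ⊆ univ.filter fun x : F ↦ x ^ 2 ^ m = x := by
    simp only [subset_iff, mem_image, mem_filter, mem_univ, true_and, forall_exists_index,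
      relTrace_apply]
    rintro _ x rfl
    rw [add_pow_char_pow, pow_two_pow_pow_two_pow_of_card hF, add_comm]
  have hm : m ≠ 0 := by
    rintro rfl
    simpa [hF] using Fintype.one_lt_card (α := F)
  have hfixed := card_pow_two_pow_eq_self_le (F := F) hm
  have hmul := (relTrace F m).card_eq_card_image_mul_card_ker
  have hcard_image : #(univ.image (relTrace F m)) = 2 ^ m := by
    have := card_le_card himage
    rw [hF, hker] at hmul
    nlinarith
  have hcard_ker : #{x : F | relTrace F m x = 0} = 2 ^ m := by
    rw [hF, hcard_image] at hmul
    nlinarith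
  have hw_mem : w ∈ univ.image (relTrace F m) := by
    rw [eq_of_subset_of_card_le himage (hcard_image ▸ hfixed)]
    simpa using hw
  obtain ⟨x, -, rfl⟩ := mem_image.1 hw_mem
  exact (AddMonoidHom.card_fiber_eq_of_mem_range _ ⟨x, rfl⟩ ⟨0, map_zero _⟩).trans hcard_ker

variable (m) in
def linearizedMap (α β γ : F) : F →+ F where
  toFun x := α * (x ^ 2 ^ m) ^ 2 + β * x ^ 2 + γ * x
  map_zero' := by simp
  map_add' x y := by simp only [add_pow_char_pow, CharTwo.add_sq]; ring

@[simp]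
lemma linearizedMap_apply (α β γ x : F) :
    linearizedMap m α β γ x = α * (x ^ 2 ^ m) ^ 2 + β * x ^ 2 + γ * x := rfl

lemma card_ker_linearizedMap_zero_le [Fintype F] [DecidableEq F] (hm : m ≠ 0) {α : F}
    (hα : α ≠ 0) (β : F) : #{x | linearizedMap m α β 0 x = 0} ≤ 2 ^ m := by
  have hsq := FiniteField.isSquare_of_char_two (ringChar.eq F 2)
  obtain ⟨α', rfl⟩ := hsq α
  obtain ⟨β', rfl⟩ := hsq β
  have hα' : α' ≠ 0 := by rintro rfl; simp at hα
  have hone : (2 : ℕ) ^ m ≠ 1 := by simpa using hm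
  refine card_filter_le_natDegree (p := C α' * X ^ 2 ^ m + C β' * X) (fun h ↦ hα' ?_)
    (fun x hx ↦ ?_) |>.trans (by compute_degree!; exact Nat.one_le_two_pow)
  · simpa [coeff_X, Ne.symm hone] using congrArg (coeff · (2 ^ m)) h
  · have hsq : linearizedMap m (α' * α') (β' * β') 0 x = (α' * x ^ 2 ^ m + β' * x) ^ 2 := by
      rw [linearizedMap_apply, CharTwo.add_sq]
      ring
    simpa [hsq] using hx

lemma card_ker_linearizedMap_le_four [Fintype F] [DecidableEq F]
    (hF : Fintype.card F = (2 ^ m) ^ 2) {α γ : F} (hα : α ≠ 0) (hγ : γ ≠ 0) (β : F) :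
    #{x | linearizedMap m α β γ x = 0} ≤ 4 := by
  set c₂ := β * β ^ 2 ^ m - α * α ^ 2 ^ m
  set c₁ := β ^ 2 ^ m * γ
  set k := (α * γ ^ 2 ^ m) ^ 2
  have hk : k * γ ≠ 0 := by
    have : γ ^ 2 ^ m ≠ 0 := pow_ne_zero _ hγ
    positivity
  refine card_filter_le_natDegree (p := C (α * c₂ ^ 2) * X ^ 4 + C (2 * α * c₂ * c₁) * X ^ 3
    + C (α * c₁ ^ 2 + k * β) * X ^ 2 + C (k * γ) * X) (fun h ↦ hk ?_) (fun x hx ↦ ?_)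
    |>.trans (by compute_degree!)
  · have h₁ := congrArg (coeff · 1) h
    simp only [coeff_add, coeff_C_mul, coeff_X_pow, coeff_X_one, coeff_zero] at h₁
    simpa using h₁
  · set y := x ^ 2 ^ m
    replace hx : α * y ^ 2 + β * x ^ 2 + γ * x = 0 := hx
    have hconj : α ^ 2 ^ m * x ^ 2 + β ^ 2 ^ m * y ^ 2 + γ ^ 2 ^ m * y = 0 := by
      have := congrArg (iterateFrobenius F 2 m) hx
      simp only [map_add, map_mul, map_pow, map_zero, iterateFrobenius_def] at this
      rwa [pow_two_pow_pow_two_pow_of_card hF] at this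
    have hy : α * γ ^ 2 ^ m * y = c₂ * x ^ 2 + c₁ * x := by
      linear_combination α * hconj - β ^ 2 ^ m * hx
    simp only [IsRoot.def, eval_add, eval_mul, eval_C, eval_pow, eval_X]
    linear_combination k * hx - α * (α * γ ^ 2 ^ m * y + c₂ * x ^ 2 + c₁ * x) * hy

lemma card_ker_linearizedMap_le [Fintype F] [DecidableEq F] (hF : Fintype.card F = (2 ^ m) ^ 2)
    (hm : 2 ≤ m) {α : F} (hα : α ≠ 0) (β γ : F) :
    #{x | linearizedMap m α β γ x = 0} ≤ 2 ^ m := by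
  rcases eq_or_ne γ 0 with rfl | hγ
  · exact card_ker_linearizedMap_zero_le (by omega) hα β
  · calc _ ≤ 4 := card_ker_linearizedMap_le_four hF hα hγ β
      _ = 2 ^ 2 := by norm_num
      _ ≤ 2 ^ m := Nat.pow_le_pow_right two_pos hm

lemma secondDiff_pow_eq (a b x : F) :
    secondDiff (· ^ (2 ^ (m + 1) + 3)) a b x =
      linearizedMap m (a * b * (a + b)) ((a ^ 2 ^ m) ^ 2 * b + a * (b ^ 2 ^ m) ^ 2)
        ((a ^ 2 ^ m) ^ 2 * b ^ 2 + a ^ 2 * (b ^ 2 ^ m) ^ 2) x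
      + ((a ^ 2 ^ m) ^ 2 * b + a * (b ^ 2 ^ m) ^ 2) * (a ^ 2 + a * b + b ^ 2) := by
  have hpow (z : F) : z ^ (2 ^ (m + 1) + 3) = (z ^ 2 ^ m) ^ 2 * z ^ 3 := by
    rw [pow_add, pow_succ, pow_mul]
  simp only [secondDiff, hpow, add_pow_char_pow, linearizedMap_apply]
  grind

lemma card_secondDiff_le [Fintype F] [DecidableEq F] (hF : Fintype.card F = (2 ^ m) ^ 2)
    (hm : 2 ≤ m) {a b : F} (ha : a ≠ 0) (hb : b ≠ 0) (hab : a ≠ b) :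
    #{x | secondDiff (· ^ (2 ^ (m + 1) + 3)) a b x = 0} ≤ 2 ^ m := by
  simp only [secondDiff_pow_eq, CharTwo.add_eq_zero]
  refine (AddMonoidHom.card_fiber_le_card_ker _ _).trans (card_ker_linearizedMap_le hF hm ?_ _ _)
  exact mul_ne_zero (mul_ne_zero ha hb) (fun h ↦ hab (CharTwo.add_eq_zero.1 h))

lemma exists_card_secondDiff_eq [Fintype F] [DecidableEq F] (hF : Fintype.card F = (2 ^ m) ^ 2)
    (hm : 2 ≤ m) : ∃ a b : F, a ≠ 0 ∧ b ≠ 0 ∧ a ≠ b ∧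
      #{x | secondDiff (· ^ (2 ^ (m + 1) + 3)) a b x = 0} = 2 ^ m := by
  have hfixed : #{x : F | x ^ 2 ^ m = x} = 2 ^ m := by
    simpa [CharTwo.add_eq_zero] using card_relTrace_fiber hF (w := 0) (zero_pow (by positivity))
  obtain ⟨t, ht, ht01⟩ := exists_mem_notMem_of_card_lt_card (s := {0, 1})
    (t := univ.filter fun x : F ↦ x ^ 2 ^ m = x) <| by
      calc #{(0 : F), 1} ≤ 2 := card_le_two
        _ < 2 ^ 2 := by norm_num
        _ ≤ 2 ^ m := Nat.pow_le_pow_right two_pos hm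
        _ = _ := hfixed.symm
  simp only [mem_filter, mem_univ, true_and, mem_insert, mem_singleton, not_or] at ht ht01
  obtain ⟨ht0, ht1⟩ := ht01
  obtain ⟨w, hw⟩ := FiniteField.isSquare_of_char_two (ringChar.eq F 2) (t ^ 2 + t + 1)
  have hw_fixed : w ^ 2 ^ m = w := by
    have := congrArg (iterateFrobenius F 2 m) hw
    simp only [map_add, map_mul, map_pow, map_one, iterateFrobenius_def, ht] at this
    exact CharTwo.sq_injective (by linear_combination hw - this)
  have hD (x : F) : secondDiff (· ^ (2 ^ (m + 1) + 3)) t 1 x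
      = t * (t + 1) * (x ^ 2 ^ m + x + w) ^ 2 := by
    rw [secondDiff_pow_eq, linearizedMap_apply, ht, one_pow]
    grind
  have ht1' : t + 1 ≠ 0 := fun h ↦ ht1 (CharTwo.add_eq_zero.1 h)
  refine ⟨t, 1, ht0, one_ne_zero, ht1, ?_⟩
  rw [← card_relTrace_fiber hF hw_fixed]
  simp only [hD, mul_eq_zero, ht0, ht1', pow_eq_zero_iff two_ne_zero, false_or,
    CharTwo.add_eq_zero]

end CharTwo

theorem stmt_8 (m n : ℕ) (hm : 2 ≤ m) (hn : n = 2 * m)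
    (F : Type) [Field F] [Fintype F] [DecidableEq F]
    (hcard : Fintype.card F = 2 ^ n) :
    IsGreatest {k : ℕ | ∃ a b : F, a ≠ 0 ∧ b ≠ 0 ∧ a ≠ b ∧
      (Finset.univ.filter (fun x : F =>
        (x + a + b) ^ (2 ^ (m + 1) + 3) + (x + b) ^ (2 ^ (m + 1) + 3) +
          (x + a) ^ (2 ^ (m + 1) + 3) + x ^ (2 ^ (m + 1) + 3) = 0)).card = k}
      (2 ^ m) := by
  have : CharP F 2 := charP_of_card_eq_prime_pow hcard
  have hF : Fintype.card F = (2 ^ m) ^ 2 := by rw [hcard, hn, ← pow_mul, mul_comm]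
  refine ⟨exists_card_secondDiff_eq hF hm, ?_⟩
  rintro k ⟨a, b, ha, hb, hab, rfl⟩
  exact card_secondDiff_le hF hm ha hb hab
end

section
/- Let m ≥ 1, n = 2m+1, and let F(x) = x^{2^{m+1}+3} on F_{2^n}. Let a, b ∈ F_{2^n} with ab(a+b) ≠ 0 and set c = a/b (note c ∉ F_2, and then c^{2^{m+1}} ≠ c and c^{2^m} ≠ c, so all denominators below are nonzero). Put a_0 = (c^{2^m}+c^2)^2(c^{2^{m+1}}+c^2)/(c^{2^{m+2}}+c^2) + (c^{2^{m+1}}+c)(c^4+c)/(c^{2^{m+1}}+c^2), a_1 = c^2 + c, ω_1 = a_0/a_1^2, ω_2 = a_0 c^2/a_1^2, ω_3 = a_0 (c+1)^2/a_1^2, and assume a_0 ≠ 0. If Tr_1^n(ω_i) = 1 for some i ∈ {1,2,3}, then ∇_F(a,b) = 0. -/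
/-!
Write `x = y b`, `a = c b` and `σ z = z ^ 2 ^ (m + 1)`; on `𝔽_{2^{2m+1}}` the additive map `σ`
satisfies `σ (σ z) = z ^ 2`. Since `z ^ (2 ^ (m + 1) + 3) = σ z * z ^ 3`, the second-order difference
of `F` at `y` is linear in `σ y`, and eliminating `σ y` between this equation and its image under `σ`
leaves `a₀ = y (y + 1) (y + c) (y + c + 1)`. Pairing the four roots `0, 1, c, c + 1` in the three
possible ways writes `a₀ = z (z + k)` with `k = c² + c`, `c + 1`, `c`, hence `ωᵢ = r² + r` with
`r = z / k`, and such an element has trace `r ^ 2 ^ n + r = 0`.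
-/

open Finset

def absTrace {R : Type*} [CommRing R] (n : ℕ) (z : R) : R := ∑ i ∈ range n, z ^ 2 ^ i

theorem second_diff_mul_right {R : Type*} [CommRing R] (e : ℕ) (y c b : R) :
    (y * b + c * b + b) ^ e + (y * b + b) ^ e + (y * b + c * b) ^ e + (y * b) ^ e =
      ((y + c + 1) ^ e + (y + 1) ^ e + (y + c) ^ e + y ^ e) * b ^ e := by
  rw [show y * b + c * b + b = (y + c + 1) * b by ring, show y * b + b = (y + 1) * b by ring,
    ← add_mul]
  simp only [mul_pow]
  ring

section CharTwo

variable {R : Type*} [CommRing R] [CharP R 2]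

theorem absTrace_sq_add_self {n : ℕ} {r : R} (hr : r ^ 2 ^ n = r) :
    absTrace n (r ^ 2 + r) = 0 := by
  have hterm : ∀ i, (r ^ 2 + r) ^ 2 ^ i = r ^ 2 ^ (i + 1) - r ^ 2 ^ i := fun i => by
    rw [add_pow_char_pow, ← pow_mul, ← pow_succ', CharTwo.sub_eq_add]
  simp only [absTrace, hterm, sum_range_sub (fun i => r ^ 2 ^ i), hr, pow_zero, pow_one, sub_self]

theorem pow_two_pow_add_three_second_diff (k : ℕ) (y c : R) :
    (y + c + 1) ^ (2 ^ k + 3) + (y + 1) ^ (2 ^ k + 3) + (y + c) ^ (2 ^ k + 3) + y ^ (2 ^ k + 3) =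
      c * (c + 1) * y ^ 2 ^ k + (c ^ 2 ^ k + c) * y ^ 2 + (c ^ 2 ^ k + c ^ 2) * y +
        (c ^ 2 ^ k + c) * (c ^ 2 + c + 1) := by
  simp only [pow_add, add_pow_char_pow, one_pow]
  linear_combination (norm := ring_nf)
  reduce_mod_char!

theorem quartic_of_second_diff_eq_zero (σ : R →+* R) (hσ : ∀ z, σ (σ z) = z ^ 2) {y c : R}
    (h : c * (c + 1) * σ y + (σ c + c) * y ^ 2 + (σ c + c ^ 2) * y +
      (σ c + c) * (c ^ 2 + c + 1) = 0) :
    (σ c + c) ^ 2 * (σ c + c ^ 2) * (y * (y + 1) * (y + c) * (y + c + 1)) =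
      (σ c + c ^ 4) * (σ c + c ^ 2) ^ 2 + (σ c + c) ^ 3 * (c ^ 4 + c) := by
  have hσh := congrArg σ h
  simp only [map_add, map_mul, map_pow, map_one, map_zero, hσ] at hσh
  -- `σ (σ y) = y ^ 2`, so `σ h` is quadratic in `σ y`; substitute `c (c + 1) σ y` from `h`.
  linear_combination (norm := ring_nf) (c * (c + 1)) ^ 2 * hσh +
    ((σ c + c ^ 2) * (c * (c + 1) * σ y + (σ c + c) * y ^ 2 + (σ c + c ^ 2) * y +
      (σ c + c) * (c ^ 2 + c + 1)) + (σ c ^ 2 + c ^ 2) * c * (c + 1)) * h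
  reduce_mod_char!

end CharTwo

section Field

variable {K : Type*} [Field K] [CharP K 2]

theorem absTrace_mul_add_div_sq {n : ℕ} (hfrob : ∀ r : K, r ^ 2 ^ n = r) {z k : K} (hk : k ≠ 0) :
    absTrace n (z * (z + k) / k ^ 2) = 0 := by
  rw [show z * (z + k) / k ^ 2 = (z / k) ^ 2 + z / k by field_simp]
  exact absTrace_sq_add_self (hfrob _)

theorem absTrace_quartic_mul_sq_div {n : ℕ} (hfrob : ∀ r : K, r ^ 2 ^ n = r) {y c g : K}
    (hc : c * (c + 1) ≠ 0) (hg : g = 1 ∨ g = c ∨ g = c + 1) :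
    absTrace n (y * (y + 1) * (y + c) * (y + c + 1) * g ^ 2 / (c ^ 2 + c) ^ 2) = 0 := by
  have hc0 : c ≠ 0 := left_ne_zero_of_mul hc
  have hc1 : c + 1 ≠ 0 := right_ne_zero_of_mul hc
  rcases hg with hg | hg | hg <;> subst g
  · rw [show y * (y + 1) * (y + c) * (y + c + 1) * 1 ^ 2 / (c ^ 2 + c) ^ 2 =
        (y ^ 2 + y) * (y ^ 2 + y + (c ^ 2 + c)) / (c ^ 2 + c) ^ 2 by
      linear_combination (norm := ring_nf)
      reduce_mod_char!]
    exact absTrace_mul_add_div_sq hfrob (by rwa [sq, ← mul_add_one])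
  · rw [show y * (y + 1) * (y + c) * (y + c + 1) * c ^ 2 / (c ^ 2 + c) ^ 2 =
        (y ^ 2 + c * y) * (y ^ 2 + c * y + (c + 1)) / (c + 1) ^ 2 by
      field_simp
      linear_combination (norm := ring_nf)
      reduce_mod_char!]
    exact absTrace_mul_add_div_sq hfrob hc1
  · rw [show y * (y + 1) * (y + c) * (y + c + 1) * (c + 1) ^ 2 / (c ^ 2 + c) ^ 2 =
        (y ^ 2 + (c + 1) * y) * (y ^ 2 + (c + 1) * y + c) / c ^ 2 by
      field_simp
      ring]
    exact absTrace_mul_add_div_sq hfrob hc0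

variable (σ : K →+* K) (hσ : ∀ z, σ (σ z) = z ^ 2)
include hσ

theorem map_add_self_ne_zero {c : K} (hc : c * (c + 1) ≠ 0) : σ c + c ≠ 0 := by
  rw [Ne, CharTwo.add_eq_zero]
  intro h
  have h2 := hσ c
  rw [h, h] at h2
  refine hc ?_
  linear_combination (norm := ring_nf) -h2
  reduce_mod_char!

theorem map_add_sq_ne_zero {c : K} (hc : c * (c + 1) ≠ 0) : σ c + c ^ 2 ≠ 0 := by
  rw [Ne, CharTwo.add_eq_zero]
  intro h
  have h2 := hσ c
  rw [h, map_pow, h] at h2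
  refine hc (pow_eq_zero_iff two_ne_zero |>.mp ?_)
  linear_combination (norm := ring_nf) -h2
  reduce_mod_char!

theorem quartic_eq_of_second_diff_eq_zero {y c e : K} (hc : c * (c + 1) ≠ 0) (he : e ^ 2 = σ c)
    (h : c * (c + 1) * σ y + (σ c + c) * y ^ 2 + (σ c + c ^ 2) * y +
      (σ c + c) * (c ^ 2 + c + 1) = 0) :
    (e + c ^ 2) ^ 2 * (σ c + c ^ 2) / (σ c ^ 2 + c ^ 2) + (σ c + c) * (c ^ 4 + c) / (σ c + c ^ 2) =
      y * (y + 1) * (y + c) * (y + c + 1) := by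
  have hs := map_add_self_ne_zero σ hσ hc
  have ht := map_add_sq_ne_zero σ hσ hc
  rw [← CharTwo.add_sq, CharTwo.add_sq e, he, ← pow_mul]
  field_simp
  linear_combination (norm := ring_nf) quartic_of_second_diff_eq_zero σ hσ h
  reduce_mod_char!

end Field

theorem iterateFrobenius_iterateFrobenius_eq_sq {F : Type*} [Field F] [Fintype F] [CharP F 2]
    {m : ℕ} (hcard : Fintype.card F = 2 ^ (2 * m + 1)) (z : F) :
    iterateFrobenius F 2 (m + 1) (iterateFrobenius F 2 (m + 1) z) = z ^ 2 := by
  simp only [iterateFrobenius_def, ← pow_mul, ← pow_add]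
  rw [show m + 1 + (m + 1) = 2 * m + 1 + 1 by ring, pow_succ, pow_mul, ← hcard,
    FiniteField.pow_card]

theorem stmt_10_general (m n : ℕ) (hn : n = 2 * m + 1)
    (F : Type) [Field F] [Fintype F] [DecidableEq F]
    (hcard : Fintype.card F = 2 ^ n)
    (a b : F) (hab : a * b * (a + b) ≠ 0)
    (c : F) (hc : c = a / b)
    (a₀ a₁ ω₁ ω₂ ω₃ : F)
    (ha₀ : a₀ = (c ^ 2 ^ m + c ^ 2) ^ 2 * (c ^ 2 ^ (m + 1) + c ^ 2) /
        (c ^ 2 ^ (m + 2) + c ^ 2) +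
      (c ^ 2 ^ (m + 1) + c) * (c ^ 4 + c) / (c ^ 2 ^ (m + 1) + c ^ 2))
    (ha₁ : a₁ = c ^ 2 + c)
    (hω₁ : ω₁ = a₀ / a₁ ^ 2) (hω₂ : ω₂ = a₀ * c ^ 2 / a₁ ^ 2)
    (hω₃ : ω₃ = a₀ * (c + 1) ^ 2 / a₁ ^ 2)
    (htr : (∑ i ∈ Finset.range n, ω₁ ^ 2 ^ i = 1) ∨
           (∑ i ∈ Finset.range n, ω₂ ^ 2 ^ i = 1) ∨
           (∑ i ∈ Finset.range n, ω₃ ^ 2 ^ i = 1)) :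
    (Finset.univ.filter (fun x : F =>
      (x + a + b) ^ (2 ^ (m + 1) + 3) + (x + b) ^ (2 ^ (m + 1) + 3) +
        (x + a) ^ (2 ^ (m + 1) + 3) + x ^ (2 ^ (m + 1) + 3) = 0)).card = 0 := by
  subst hn
  have : CharP F 2 := charP_of_card_eq_prime_pow hcard
  have hfrob : ∀ z : F, z ^ 2 ^ (2 * m + 1) = z := fun z => hcard ▸ FiniteField.pow_card z
  have hb : b ≠ 0 := right_ne_zero_of_mul (left_ne_zero_of_mul hab)
  have hac : a = c * b := by rw [hc, div_mul_cancel₀ _ hb]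
  have hc : c * (c + 1) ≠ 0 := by
    rw [show c * (c + 1) = a * b * (a + b) / b ^ 3 by rw [hc]; field_simp]
    exact div_ne_zero hab (pow_ne_zero 3 hb)
  rw [Finset.card_eq_zero, Finset.filter_eq_empty_iff]
  rintro x - hx
  obtain ⟨y, rfl⟩ : ∃ y, x = y * b := ⟨x / b, (div_mul_cancel₀ x hb).symm⟩
  rw [hac, second_diff_mul_right, pow_two_pow_add_three_second_diff] at hx
  have hquartic : a₀ = y * (y + 1) * (y + c) * (y + c + 1) := by
    rw [ha₀, show c ^ 2 ^ (m + 2) = (c ^ 2 ^ (m + 1)) ^ 2 by ring]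
    exact quartic_eq_of_second_diff_eq_zero (iterateFrobenius F 2 (m + 1))
      (iterateFrobenius_iterateFrobenius_eq_sq hcard) hc
      (by rw [iterateFrobenius_def, ← pow_mul, ← pow_succ])
      ((mul_eq_zero.mp hx).resolve_right (pow_ne_zero _ hb))
  subst hω₁ hω₂ hω₃ ha₁ hquartic
  have htrace := fun g hg => absTrace_quartic_mul_sq_div hfrob (y := y) hc (g := g) hg
  rcases htr with h | h | h
  · have h₁ := htrace 1 (.inl rfl)
    rw [one_pow, mul_one] at h₁
    exact one_ne_zero (h.symm.trans h₁)
  · exact one_ne_zero (h.symm.trans (htrace c (.inr (.inl rfl))))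
  · exact one_ne_zero (h.symm.trans (htrace (c + 1) (.inr (.inr rfl))))

theorem stmt_10 (m n : ℕ) (hm : 1 ≤ m) (hn : n = 2 * m + 1)
    (F : Type) [Field F] [Fintype F] [DecidableEq F]
    (hcard : Fintype.card F = 2 ^ n)
    (a b : F) (hab : a * b * (a + b) ≠ 0)
    (c : F) (hc : c = a / b)
    (a₀ a₁ ω₁ ω₂ ω₃ : F)
    (ha₀ : a₀ = (c ^ 2 ^ m + c ^ 2) ^ 2 * (c ^ 2 ^ (m + 1) + c ^ 2) /
        (c ^ 2 ^ (m + 2) + c ^ 2) +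
      (c ^ 2 ^ (m + 1) + c) * (c ^ 4 + c) / (c ^ 2 ^ (m + 1) + c ^ 2))
    (ha₁ : a₁ = c ^ 2 + c)
    (hω₁ : ω₁ = a₀ / a₁ ^ 2) (hω₂ : ω₂ = a₀ * c ^ 2 / a₁ ^ 2)
    (hω₃ : ω₃ = a₀ * (c + 1) ^ 2 / a₁ ^ 2)
    (ha₀ne : a₀ ≠ 0)
    (htr : (∑ i ∈ Finset.range n, ω₁ ^ 2 ^ i = 1) ∨
           (∑ i ∈ Finset.range n, ω₂ ^ 2 ^ i = 1) ∨
           (∑ i ∈ Finset.range n, ω₃ ^ 2 ^ i = 1)) :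
    (Finset.univ.filter (fun x : F =>
      (x + a + b) ^ (2 ^ (m + 1) + 3) + (x + b) ^ (2 ^ (m + 1) + 3) +
        (x + a) ^ (2 ^ (m + 1) + 3) + x ^ (2 ^ (m + 1) + 3) = 0)).card = 0 :=
  stmt_10_general m n hn F hcard a b hab c hc a₀ a₁ ω₁ ω₂ ω₃ ha₀ ha₁ hω₁ hω₂ hω₃ htr
end

section
/- Let p be an odd prime with p ≠ 5, n a positive integer, and let F(x) = x^5 on F_{p^n}. For all a, b ∈ F_{p^n} with ab ≠ 0, if η(−(a^2+b^2)) = 1 (i.e. −(a^2+b^2) is a nonzero square in F_{p^n}), then ∇_F(a,b) = 3. -/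
/-!
With `y = 2x + a + b` the second difference `Δ` of `x ^ 5` satisfies
`2Δ = 5ab · y · (y ^ 2 + a ^ 2 + b ^ 2)`. Writing `-(a ^ 2 + b ^ 2) = t ^ 2` with `t ≠ 0`, the last
factor is `(y - t)(y + t)`, so (as `2`, `5`, `a`, `b` are units) `Δ = 0` exactly when
`y ∈ {0, t, -t}`: three distinct values in odd characteristic, each hit by exactly one `x`.
-/

open Finset

theorem two_mul_second_diff_pow_five {R : Type*} [CommRing R] (a b x : R) :
    2 * ((x + a + b) ^ 5 - (x + b) ^ 5 - (x + a) ^ 5 + x ^ 5)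
      = 5 * a * b * (2 * x + a + b) * ((2 * x + a + b) ^ 2 + (a ^ 2 + b ^ 2)) := by
  ring

theorem natCast_ne_zero_of_prime_ne {R : Type*} [AddMonoidWithOne R] {p q : ℕ} [CharP R p]
    (hp : p.Prime) (hq : q.Prime) (hpq : p ≠ q) : (q : R) ≠ 0 := by
  rw [ne_eq, CharP.cast_eq_zero_iff R p, Nat.prime_dvd_prime_iff_eq hp hq]
  exact hpq

theorem card_filter_mul_add_mem {K : Type*} [Field K] [Fintype K] [DecidableEq K] {c : K}
    (hc : c ≠ 0) (d : K) (s : Finset K) : #{x | c * x + d ∈ s} = #s := by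
  refine card_nbij' (fun x ↦ c * x + d) (fun y ↦ (y - d) / c) ?_ ?_ ?_ ?_
  · intro x hx; simpa using hx
  · intro y hy; simpa [mul_div_cancel₀ _ hc] using hy
  · intro x _; simp [hc]
  · intro y _; simp [mul_div_cancel₀ _ hc]

theorem card_zero_self_neg {K : Type*} [Field K] [DecidableEq K] (h2 : (2 : K) ≠ 0) {t : K}
    (ht : t ≠ 0) : #({0, t, -t} : Finset K) = 3 := by
  have h : t ≠ -t := fun h ↦ ht <| by simpa [← two_mul, h2] using eq_neg_iff_add_eq_zero.mp h
  rw [card_insert_of_notMem (by simp [ht, ht.symm]), card_pair h]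

theorem second_diff_pow_five_eq_zero_iff {K : Type*} [Field K] [DecidableEq K] (h2 : (2 : K) ≠ 0)
    (h5 : (5 : K) ≠ 0) {a b t : K} (hab : a * b ≠ 0) (ht : -(a ^ 2 + b ^ 2) = t * t) (x : K) :
    (x + a + b) ^ 5 - (x + b) ^ 5 - (x + a) ^ 5 + x ^ 5 = 0 ↔
      2 * x + (a + b) ∈ ({0, t, -t} : Finset K) := by
  have hsq : (2 * x + a + b) ^ 2 + (a ^ 2 + b ^ 2) = (2 * x + a + b - t) * (2 * x + a + b + t) := by
    linear_combination -ht
  obtain ⟨ha, hb⟩ := mul_ne_zero_iff.mp hab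
  rw [← mul_right_inj' h2, mul_zero, two_mul_second_diff_pow_five, hsq, ← add_assoc]
  simp [h5, ha, hb, sub_eq_zero, add_eq_zero_iff_eq_neg]

theorem stmt_13_general (p n : ℕ) (hp : p.Prime) (hodd : p ≠ 2) (hp5 : p ≠ 5)
    (F : Type) [Field F] [Fintype F] [DecidableEq F]
    (hcard : Fintype.card F = p ^ n)
    (a b : F) (hab : a * b ≠ 0)
    (hsq : IsSquare (-(a ^ 2 + b ^ 2))) (hne : -(a ^ 2 + b ^ 2) ≠ 0) :
    (Finset.univ.filter (fun x : F =>
      (x + a + b) ^ 5 - (x + b) ^ 5 - (x + a) ^ 5 + x ^ 5 = 0)).card = 3 := by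
  have : Fact p.Prime := ⟨hp⟩
  have : CharP F p := charP_of_card_eq_prime_pow hcard
  have h2 : (2 : F) ≠ 0 := by exact_mod_cast natCast_ne_zero_of_prime_ne hp Nat.prime_two hodd
  have h5 : (5 : F) ≠ 0 := by exact_mod_cast natCast_ne_zero_of_prime_ne hp Nat.prime_five hp5
  obtain ⟨t, ht⟩ := hsq
  have ht0 : t ≠ 0 := by rintro rfl; exact hne (by simpa using ht)
  simp_rw [second_diff_pow_five_eq_zero_iff h2 h5 hab ht]
  rw [card_filter_mul_add_mem h2, card_zero_self_neg h2 ht0]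

theorem stmt_13 (p n : ℕ) (hp : p.Prime) (hodd : p ≠ 2) (hp5 : p ≠ 5) (hn : 0 < n)
    (F : Type) [Field F] [Fintype F] [DecidableEq F]
    (hcard : Fintype.card F = p ^ n)
    (a b : F) (hab : a * b ≠ 0)
    (hsq : IsSquare (-(a ^ 2 + b ^ 2))) (hne : -(a ^ 2 + b ^ 2) ≠ 0) :
    (Finset.univ.filter (fun x : F =>
      (x + a + b) ^ 5 - (x + b) ^ 5 - (x + a) ^ 5 + x ^ 5 = 0)).card = 3 :=
  stmt_13_general p n hp hodd hp5 F hcard a b hab hsq hne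
end
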